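/- Let r > 1/2 and define φ(x) = ∫_{−∞}^x ⟨s⟩^{−2r} ds, where ⟨s⟩² = 1 + s². Then there exists C > 0 such that for all x, y ∈ ℝ, φ(y) − φ(x) = (y − x)/(⟨x⟩^r ⟨y⟩^r) + Q(x,y), where the remainder Q(x,y) satisfies: (i) |Q(x,y)| ≤ C |x−y|²/(⟨x⟩ + ⟨y⟩)^{2r+1} whenever |x−y| ≤ (1/2)(⟨x⟩ + ⟨y⟩); and (ii) |Q(x,y)| ≤ C + C |x−y|/(⟨x⟩^r ⟨y⟩^r) whenever |x−y| ≥ (1/2)(⟨x⟩ + ⟨y⟩). -/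

import Mathlib

open MeasureTheory Complex ComplexConjugate

noncomputable section

/-- Japanese bracket `⟨x⟩ = (1+x²)^{1/2}`. -/
def jap (x : ℝ) : ℝ := Real.sqrt (1 + x ^ 2)

/-- Fourier transform with the convention `û(ξ) = ∫ e^{-ixξ} u(x) dx`. -/
def FT (u : ℝ → ℂ) (ξ : ℝ) : ℂ := ∫ x : ℝ, Complex.exp (-(Complex.I * (x : ℂ) * (ξ : ℂ))) * u x

/-- Inverse Fourier transform `(1/2π) ∫ e^{ixξ} v(ξ) dξ`. -/
def FTinv (v : ℝ → ℂ) (x : ℝ) : ℂ :=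
  ((2 * Real.pi)⁻¹ : ℝ) • ∫ ξ : ℝ, Complex.exp (Complex.I * (x : ℂ) * (ξ : ℂ)) * v ξ

/-- The Fourier multiplier `|D|^α` with symbol `|ξ|^α`. -/
def fracD (α : ℝ) (u : ℝ → ℂ) : ℝ → ℂ :=
  FTinv (fun ξ => ((|ξ| ^ α : ℝ) : ℂ) * FT u ξ)

end

/-!
Write `A = ⟨x⟩ + ⟨y⟩`. The remainder is `Q(x,y) = ∫_x^y (⟨s⟩^{-2r} - ⟨x⟩^{-r}⟨y⟩^{-r}) ds`, and the
constant `⟨x⟩^{-r}⟨y⟩^{-r}`, a geometric mean, lies between the values `⟨x⟩^{-2r}` and `⟨y⟩^{-2r}`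
of the integrand at the endpoints. If `|x - y| ≤ A/2`, then `⟨s⟩ ≥ A/4` on `[x, y]` because `⟨·⟩` is
`1`-Lipschitz, so the integrand is `2r (A/4)^{-2r-1}`-Lipschitz there and the integral of its
deviation from any intermediate value is `O(|x - y|² / A^{2r+1})`. Far from the diagonal one simply
bounds `|φ(y) - φ(x)|` by `∫_ℝ ⟨s⟩^{-2r} ds`, which is finite since `2r > 1`.
-/

open Set intervalIntegral

noncomputable def phi (r x : ℝ) : ℝ := ∫ s in Iic x, jap s ^ (-(2 * r))

lemma one_le_jap (x : ℝ) : 1 ≤ jap x :=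
  Real.one_le_sqrt.mpr (by nlinarith [sq_nonneg x])

lemma jap_pos (x : ℝ) : 0 < jap x := zero_lt_one.trans_le (one_le_jap x)

lemma abs_le_jap (x : ℝ) : |x| ≤ jap x := Real.abs_le_sqrt (by linarith)

lemma jap_eq_norm (x : ℝ) : jap x = ‖((1 : ℝ) : ℂ) + x * I‖ := by
  rw [norm_add_mul_I, one_pow, jap]

lemma abs_jap_sub_jap_le (x y : ℝ) : |jap x - jap y| ≤ |x - y| := by
  have h : (((1 : ℝ) : ℂ) + x * I) - (((1 : ℝ) : ℂ) + y * I) = ((x - y : ℝ) : ℂ) * I := by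
    push_cast; ring
  calc |jap x - jap y| ≤ ‖(((1 : ℝ) : ℂ) + x * I) - (((1 : ℝ) : ℂ) + y * I)‖ := by
        rw [jap_eq_norm, jap_eq_norm]
        exact abs_norm_sub_norm_le _ _
    _ = |x - y| := by rw [h, norm_mul, norm_I, mul_one, norm_real, Real.norm_eq_abs]

lemma jap_rpow (p x : ℝ) : jap x ^ p = (1 + x ^ 2) ^ (p / 2) := by
  rw [jap, Real.sqrt_eq_rpow, ← Real.rpow_mul (by positivity)]
  ring_nf

lemma jap_rpow_neg_two_mul (r x : ℝ) : jap x ^ (-(2 * r)) = (jap x ^ r * jap x ^ r)⁻¹ := by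
  rw [Real.rpow_neg (jap_pos x).le, two_mul, Real.rpow_add (jap_pos x)]

lemma add_div_four_le_jap_of_mem_uIcc {x y s : ℝ} (hxy : |x - y| ≤ (1 / 2) * (jap x + jap y))
    (hs : s ∈ uIcc x y) : (jap x + jap y) / 4 ≤ jap s := by
  have hsplit : |x - s| + |s - y| = |x - y| := by
    simpa only [Real.dist_eq] using
      dist_add_dist_of_mem_segment (E := ℝ) (by rwa [segment_eq_uIcc])
  have hx := (abs_le.mp (abs_jap_sub_jap_le x s)).2
  have hy := (abs_le.mp (abs_jap_sub_jap_le s y)).1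
  linarith

lemma hasDerivAt_jap (x : ℝ) : HasDerivAt jap (x / jap x) x := by
  have h := ((hasDerivAt_pow 2 x).const_add 1).sqrt (by positivity)
  unfold jap
  convert h using 1
  field_simp
  ring

lemma continuous_jap_rpow (p : ℝ) : Continuous fun x => jap x ^ p :=
  (continuous_const.add (continuous_pow 2)).sqrt.rpow_const fun x => Or.inl (jap_pos x).ne'

lemma integrable_jap_rpow_neg {p : ℝ} (hp : 1 < p) : Integrable fun x => jap x ^ (-p) := by
  have h := integrable_rpow_neg_one_add_norm_sq (E := ℝ) (μ := volume) (r := p) (by simpa using hp)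
  simpa [jap_rpow, neg_div] using h

lemma abs_jap_rpow_neg_sub_le {p B a b : ℝ} (hp : 0 ≤ p) (hB : 0 < B)
    (hlow : ∀ s ∈ uIcc a b, B ≤ jap s) :
    |jap b ^ (-p) - jap a ^ (-p)| ≤ p * B ^ (-(p + 1)) * |b - a| := by
  have hderiv : ∀ s ∈ uIcc a b, ‖s / jap s * -p * jap s ^ (-p - 1)‖ ≤ p * B ^ (-(p + 1)) := by
    intro s hs
    have hs0 := jap_pos s
    have hratio : |s / jap s| ≤ 1 := by
      rw [abs_div, abs_of_pos hs0]
      exact div_le_one_of_le₀ (abs_le_jap s) hs0.le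
    have hpow : jap s ^ (-(p + 1)) ≤ B ^ (-(p + 1)) :=
      Real.rpow_le_rpow_of_nonpos hB (hlow s hs) (by linarith)
    calc ‖s / jap s * -p * jap s ^ (-p - 1)‖ = |s / jap s| * (p * jap s ^ (-(p + 1))) := by
          rw [Real.norm_eq_abs, abs_mul, abs_mul, abs_neg, abs_of_nonneg hp,
            abs_of_pos (Real.rpow_pos_of_pos hs0 _), neg_add']
          ring
      _ ≤ 1 * (p * B ^ (-(p + 1))) := by gcongr
      _ = p * B ^ (-(p + 1)) := one_mul _
  simpa [Real.norm_eq_abs] using (convex_uIcc a b).norm_image_sub_le_of_norm_hasDerivWithin_le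
    (fun s _ => ((hasDerivAt_jap s).rpow_const (p := -p) (Or.inl (jap_pos s).ne')).hasDerivWithinAt)
    hderiv left_mem_uIcc right_mem_uIcc

lemma inv_mul_mem_uIcc_inv_mul_self {a b : ℝ} (ha : 0 < a) (hb : 0 < b) :
    (a * b)⁻¹ ∈ uIcc (a * a)⁻¹ (b * b)⁻¹ := by
  rcases le_total a b with h | h
  · rw [uIcc_of_ge (by gcongr)]
    exact ⟨by gcongr, by gcongr⟩
  · rw [uIcc_of_le (by gcongr)]
    exact ⟨by gcongr, by gcongr⟩

lemma abs_integral_sub_le_of_mem_uIcc {f : ℝ → ℝ} {x y c K : ℝ} (hK : 0 ≤ K)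
    (hf : ∀ a ∈ uIcc x y, ∀ b ∈ uIcc x y, |f b - f a| ≤ K * |b - a|)
    (hc : c ∈ uIcc (f x) (f y)) :
    |∫ s in x..y, (f s - c)| ≤ 2 * K * |y - x| ^ 2 := by
  have hpt : ∀ s ∈ uIoc x y, ‖f s - c‖ ≤ 2 * K * |y - x| := by
    intro s hs
    have hs' := uIoc_subset_uIcc hs
    calc ‖f s - c‖ ≤ |f s - f x| + |f x - c| := abs_sub_le _ _ _
      _ ≤ K * |s - x| + |f y - f x| :=
          add_le_add (hf _ left_mem_uIcc _ hs') (abs_sub_comm (f x) c ▸ abs_sub_left_of_mem_uIcc hc)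
      _ ≤ K * |y - x| + K * |y - x| :=
          add_le_add (mul_le_mul_of_nonneg_left (abs_sub_left_of_mem_uIcc hs') hK)
            (hf _ left_mem_uIcc _ right_mem_uIcc)
      _ = 2 * K * |y - x| := by ring
  calc |∫ s in x..y, (f s - c)| ≤ 2 * K * |y - x| * |y - x| := norm_integral_le_of_norm_le_const hpt
    _ = 2 * K * |y - x| ^ 2 := by ring

lemma phi_sub_phi {r : ℝ} (hr : 1 / 2 < r) (x y : ℝ) :
    phi r y - phi r x = ∫ s in x..y, jap s ^ (-(2 * r)) :=
  have hint := integrable_jap_rpow_neg (p := 2 * r) (by linarith)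
  integral_Iic_sub_Iic hint.integrableOn hint.integrableOn

lemma abs_phi_sub_sub_le_of_near {r x y : ℝ} (hr : 1 / 2 < r)
    (hxy : |x - y| ≤ (1 / 2) * (jap x + jap y)) :
    |phi r y - phi r x - (y - x) / (jap x ^ r * jap y ^ r)|
      ≤ 4 * r * 4 ^ (2 * r + 1) * |x - y| ^ 2 / (jap x + jap y) ^ (2 * r + 1) := by
  set A := jap x + jap y
  have hA : 0 < A := add_pos (jap_pos x) (jap_pos y)
  have hQ : phi r y - phi r x - (y - x) / (jap x ^ r * jap y ^ r)
      = ∫ s in x..y, (jap s ^ (-(2 * r)) - (jap x ^ r * jap y ^ r)⁻¹) := by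
    rw [phi_sub_phi hr, intervalIntegral.integral_sub
      ((continuous_jap_rpow _).intervalIntegrable x y) intervalIntegrable_const, intervalIntegral.integral_const, smul_eq_mul, div_eq_mul_inv]
  have hlip : ∀ a ∈ uIcc x y, ∀ b ∈ uIcc x y, |jap b ^ (-(2 * r)) - jap a ^ (-(2 * r))|
      ≤ 2 * r * (A / 4) ^ (-(2 * r + 1)) * |b - a| := fun a ha b hb =>
    abs_jap_rpow_neg_sub_le (by linarith) (by positivity) fun s hs =>
      add_div_four_le_jap_of_mem_uIcc hxy (uIcc_subset_uIcc ha hb hs)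
  have hmid : (jap x ^ r * jap y ^ r)⁻¹ ∈ uIcc (jap x ^ (-(2 * r))) (jap y ^ (-(2 * r))) := by
    rw [jap_rpow_neg_two_mul, jap_rpow_neg_two_mul]
    exact inv_mul_mem_uIcc_inv_mul_self (Real.rpow_pos_of_pos (jap_pos x) r)
      (Real.rpow_pos_of_pos (jap_pos y) r)
  have hpow : (A / 4) ^ (-(2 * r + 1)) = 4 ^ (2 * r + 1) / A ^ (2 * r + 1) := by
    rw [Real.rpow_neg (by positivity), Real.div_rpow hA.le (by norm_num), inv_div]
  calc |phi r y - phi r x - (y - x) / (jap x ^ r * jap y ^ r)|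
      ≤ 2 * (2 * r * (A / 4) ^ (-(2 * r + 1))) * |y - x| ^ 2 := by
        rw [hQ]
        exact abs_integral_sub_le_of_mem_uIcc (by positivity) hlip hmid
    _ = 4 * r * 4 ^ (2 * r + 1) * |x - y| ^ 2 / A ^ (2 * r + 1) := by
        rw [hpow, abs_sub_comm]
        ring

lemma abs_phi_sub_sub_le_integral_add {r : ℝ} (hr : 1 / 2 < r) (x y : ℝ) :
    |phi r y - phi r x - (y - x) / (jap x ^ r * jap y ^ r)|
      ≤ (∫ s, jap s ^ (-(2 * r))) + |x - y| / (jap x ^ r * jap y ^ r) := by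
  have hint := integrable_jap_rpow_neg (p := 2 * r) (by linarith)
  have hnonneg : ∀ s, 0 ≤ jap s ^ (-(2 * r)) := fun s => (Real.rpow_pos_of_pos (jap_pos s) _).le
  have hphi : ∀ t, 0 ≤ phi r t ∧ phi r t ≤ ∫ s, jap s ^ (-(2 * r)) := fun t =>
    ⟨setIntegral_nonneg measurableSet_Iic fun s _ => hnonneg s,
      setIntegral_le_integral hint (Filter.Eventually.of_forall hnonneg)⟩
  have hD : 0 < jap x ^ r * jap y ^ r :=
    mul_pos (Real.rpow_pos_of_pos (jap_pos x) r) (Real.rpow_pos_of_pos (jap_pos y) r)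
  calc |phi r y - phi r x - (y - x) / (jap x ^ r * jap y ^ r)|
      ≤ |phi r y - phi r x| + |(y - x) / (jap x ^ r * jap y ^ r)| := abs_sub _ _
    _ = |phi r y - phi r x| + |x - y| / (jap x ^ r * jap y ^ r) := by
        rw [abs_div, abs_of_pos hD, abs_sub_comm y x]
    _ ≤ (∫ s, jap s ^ (-(2 * r))) + |x - y| / (jap x ^ r * jap y ^ r) := by
        gcongr
        exact abs_sub_le_of_nonneg_of_le (hphi y).1 (hphi y).2 (hphi x).1 (hphi x).2

/-- decomposition `φ(y) − φ(x) = (y−x)/(⟨x⟩^r⟨y⟩^r) + Q(x,y)` with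
quadratic/linear remainder bounds, where `φ(x) = ∫_{-∞}^x ⟨s⟩^{-2r} ds`. -/
theorem stmt_3 (r : ℝ) (hr : 1 / 2 < r) :
    ∃ C : ℝ, 0 < C ∧ ∀ x y : ℝ,
      ((|x - y| ≤ (1 / 2) * (jap x + jap y) →
        |((∫ s in Set.Iic y, jap s ^ (-(2 * r))) - (∫ s in Set.Iic x, jap s ^ (-(2 * r))))
            - (y - x) / (jap x ^ r * jap y ^ r)|
          ≤ C * |x - y| ^ 2 / (jap x + jap y) ^ (2 * r + 1)) ∧
      ((1 / 2) * (jap x + jap y) ≤ |x - y| →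
        |((∫ s in Set.Iic y, jap s ^ (-(2 * r))) - (∫ s in Set.Iic x, jap s ^ (-(2 * r))))
            - (y - x) / (jap x ^ r * jap y ^ r)|
          ≤ C + C * |x - y| / (jap x ^ r * jap y ^ r))) := by
  set M := ∫ s, jap s ^ (-(2 * r))
  have hM : 0 ≤ M := integral_nonneg fun s => (Real.rpow_pos_of_pos (jap_pos s) _).le
  have hc : 0 < 4 * r * 4 ^ (2 * r + 1) := mul_pos (by linarith) (by positivity)
  refine ⟨M + 1 + 4 * r * 4 ^ (2 * r + 1), by linarith, fun x y => ⟨fun hxy => ?_, fun _ => ?_⟩⟩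
  · have hA : 0 < (jap x + jap y) ^ (2 * r + 1) :=
      Real.rpow_pos_of_pos (add_pos (jap_pos x) (jap_pos y)) _
    calc _ ≤ 4 * r * 4 ^ (2 * r + 1) * |x - y| ^ 2 / (jap x + jap y) ^ (2 * r + 1) :=
          abs_phi_sub_sub_le_of_near hr hxy
      _ ≤ _ := by gcongr; linarith
  · have hD : 0 ≤ |x - y| / (jap x ^ r * jap y ^ r) :=
      div_nonneg (abs_nonneg _) (mul_pos (Real.rpow_pos_of_pos (jap_pos x) r)
        (Real.rpow_pos_of_pos (jap_pos y) r)).le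
    calc _ ≤ M + |x - y| / (jap x ^ r * jap y ^ r) := abs_phi_sub_sub_le_integral_add hr x y
      _ ≤ _ := by
          rw [mul_div_assoc]
          exact add_le_add (by linarith) (le_mul_of_one_le_left hD (by linarith))
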